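/- arXiv:1911.00200 — 3 statements merged into one kernel-verified Lean document; each statement's English description precedes it below -/
import Mathlib

section
/- Let Γ ∈ C^∞([0,∞)) be nonnegative and convex with Γ(0) = Γ'(0) = 0 and with Γ' concave on [0,∞). Then for all q₁, q₂ ≥ 0 one has q₁·Γ'(q₂) ≤ Γ(q₁) + Γ(q₂). -/
open Set

/-- Tangent line inequality for a convex differentiable function. -/
lemma tangent_le (Γ Γ' : ℝ → ℝ)
    (hderiv : ∀ q ∈ Ici (0:ℝ), HasDerivWithinAt Γ (Γ' q) (Ici 0) q)
    (hconv : ConvexOn ℝ (Ici 0) Γ) :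
    ∀ a ∈ Ici (0:ℝ), ∀ b ∈ Ici (0:ℝ), Γ b + Γ' b * (a - b) ≤ Γ a := by
  intro a ha b hb
  rcases lt_trichotomy a b with h | h | h
  · have hs := hconv.slope_le_of_hasDerivWithinAt ha hb h (hderiv b hb)
    rw [slope_def_field] at hs
    rw [div_le_iff₀ (by linarith : (0:ℝ) < b - a)] at hs
    nlinarith
  · simp [h]
  · have hs := hconv.le_slope_of_hasDerivWithinAt hb ha h (hderiv b hb)
    rw [slope_def_field] at hs
    rw [le_div_iff₀ (by linarith : (0:ℝ) < a - b)] at hs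
    nlinarith

/-- Let `Γ ∈ C^∞([0,∞))` be nonnegative and convex with `Γ(0) = Γ'(0) = 0` and with `Γ'`
concave on `[0,∞)`. Then for all `q₁, q₂ ≥ 0` one has `q₁·Γ'(q₂) ≤ Γ(q₁) + Γ(q₂)`. -/
theorem convex_vp_young_type (Γ Γ' : ℝ → ℝ)
    (hsmooth : ContDiffOn ℝ (⊤ : ℕ∞) Γ (Ici 0))
    (hderiv : ∀ q ∈ Ici (0:ℝ), HasDerivWithinAt Γ (Γ' q) (Ici 0) q)
    (hnonneg : ∀ q ∈ Ici (0:ℝ), 0 ≤ Γ q)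
    (hconv : ConvexOn ℝ (Ici 0) Γ)
    (hconc : ConcaveOn ℝ (Ici 0) Γ')
    (hΓ0 : Γ 0 = 0) (hΓ'0 : Γ' 0 = 0) :
    ∀ q₁ q₂ : ℝ, 0 ≤ q₁ → 0 ≤ q₂ → q₁ * Γ' q₂ ≤ Γ q₁ + Γ q₂ := by
  have htan := tangent_le Γ Γ' hderiv hconv
  -- Γ' is monotone on Ici 0
  have hmono : MonotoneOn Γ' (Ici 0) := by
    intro a ha b hb hab
    rcases eq_or_lt_of_le hab with rfl | hab'
    · exact le_rfl
    · have h1 := htan b hb a ha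
      have h2 := htan a ha b hb
      nlinarith
  -- key estimate: q * Γ' q ≤ 2 * Γ q
  have hkey : ∀ q : ℝ, 0 < q → q * Γ' q ≤ 2 * Γ q := by
    intro q hq
    -- lower bound on Γ' on [0, q]
    have hlow : ∀ t ∈ Icc (0:ℝ) q, t / q * Γ' q ≤ Γ' t := by
      intro t ht
      have hc := hconc.2 (show (0:ℝ) ∈ Ici (0:ℝ) from mem_Ici.mpr le_rfl)
        (show q ∈ Ici (0:ℝ) from mem_Ici.mpr hq.le)
        (show (0:ℝ) ≤ 1 - t / q by
          have : t / q ≤ 1 := (div_le_one hq).mpr ht.2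
          linarith)
        (show (0:ℝ) ≤ t / q from div_nonneg ht.1 hq.le)
        (by ring)
      have he : (1 - t / q) • (0:ℝ) + (t / q) • q = t := by
        field_simp
        simp [smul_eq_mul, hq.ne']
      rw [he] at hc
      simpa [hΓ'0] using hc
    -- continuity of Γ on [0, q]
    have hcont : ContinuousOn Γ (Icc 0 q) :=
      fun x hx => ((hderiv x hx.1).continuousWithinAt).mono (fun y hy => hy.1)
    -- derivative on the interior
    have hd : ∀ x ∈ Ioo (0:ℝ) q, HasDerivWithinAt Γ (Γ' x) (Ioi x) x := fun x hx =>
      ((hderiv x hx.1.le).hasDerivAt (Ici_mem_nhds hx.1)).hasDerivWithinAt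
    -- integrability
    have hint : IntervalIntegrable Γ' MeasureTheory.volume 0 q :=
      (hmono.mono (by rw [uIcc_of_le hq.le]; exact Icc_subset_Ici_self)).intervalIntegrable
    have hftc : ∫ t in (0:ℝ)..q, Γ' t = Γ q - Γ 0 :=
      intervalIntegral.integral_eq_sub_of_hasDeriv_right_of_le hq.le hcont hd hint
    have hintlin : IntervalIntegrable (fun t => t / q * Γ' q) MeasureTheory.volume 0 q :=
      (((continuousOn_id.div_const q).mul continuousOn_const).intervalIntegrable)
    have hmonoi : ∫ t in (0:ℝ)..q, t / q * Γ' q ≤ ∫ t in (0:ℝ)..q, Γ' t := by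
      apply intervalIntegral.integral_mono_on hq.le hintlin hint
      exact hlow
    have hval : ∫ t in (0:ℝ)..q, t / q * Γ' q = q * Γ' q / 2 := by
      have : ∀ t : ℝ, t / q * Γ' q = t * (Γ' q / q) := by intro t; ring
      simp_rw [this]
      rw [intervalIntegral.integral_mul_const, integral_id]
      field_simp
      ring
    rw [hftc, hΓ0, hval] at hmonoi
    linarith
  intro q₁ q₂ hq₁ hq₂
  have h1 := htan q₁ hq₁ q₂ hq₂
  rcases eq_or_lt_of_le hq₂ with rfl | hq₂'
  · rw [hΓ'0, hΓ0]
    simpa using hnonneg q₁ hq₁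
  · have h2 := hkey q₂ hq₂'
    nlinarith
end

section
/- Let Γ ∈ C^∞([0,∞)) be nonnegative and convex with Γ(0) = Γ'(0) = 0 and with Γ' concave on [0,∞). Then for all q₁, q₂ > 0 one has 0 ≤ Γ(q₁+q₂) − Γ(q₁) − Γ(q₂) ≤ 2·(q₁·Γ(q₂) + q₂·Γ(q₁))/(q₁+q₂). -/
open Set

-- concave scaling: f concave on Ici 0, f 0 = 0 ⇒ (t/q) f q ≤ f t for 0 ≤ t ≤ q
lemma concave_scale' {f : ℝ → ℝ} (hf : ConcaveOn ℝ (Ici 0) f) (h0 : f 0 = 0)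
    {t q : ℝ} (ht : 0 ≤ t) (htq : t ≤ q) (hq : 0 < q) : (t / q) * f q ≤ f t := by
  have ha : 0 ≤ t / q := div_nonneg ht hq.le
  have hb : 0 ≤ 1 - t / q := by
    have : t / q ≤ 1 := (div_le_one hq).2 htq
    linarith
  have hab : t / q + (1 - t / q) = 1 := by ring
  have := hf.2 (mem_Ici.2 hq.le) (mem_Ici.2 le_rfl) ha hb hab
  simp only [smul_eq_mul, mul_zero, add_zero, h0] at this
  rw [div_mul_cancel₀ t hq.ne'] at this
  linarith

lemma convex_scale' {f : ℝ → ℝ} (hf : ConvexOn ℝ (Ici 0) f) (h0 : f 0 = 0)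
    {t q : ℝ} (ht : 0 ≤ t) (htq : t ≤ q) (hq : 0 < q) : f t ≤ (t / q) * f q := by
  have := concave_scale' (f := fun x => -f x) hf.neg (by simp [h0]) ht htq hq
  linarith

/-- Let `Γ ∈ C^∞([0,∞))` be nonnegative and convex with `Γ(0) = Γ'(0) = 0` and with `Γ'`
concave on `[0,∞)`. Then for all `q₁, q₂ > 0` one has
`0 ≤ Γ(q₁+q₂) − Γ(q₁) − Γ(q₂) ≤ 2·(q₁·Γ(q₂) + q₂·Γ(q₁))/(q₁+q₂)`. -/
theorem convex_vp_superadditive_bound (Γ Γ' : ℝ → ℝ)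
    (hsmooth : ContDiffOn ℝ (⊤ : ℕ∞) Γ (Ici 0))
    (hderiv : ∀ q ∈ Ici (0:ℝ), HasDerivWithinAt Γ (Γ' q) (Ici 0) q)
    (hnonneg : ∀ q ∈ Ici (0:ℝ), 0 ≤ Γ q)
    (hconv : ConvexOn ℝ (Ici 0) Γ)
    (hconc : ConcaveOn ℝ (Ici 0) Γ')
    (hΓ0 : Γ 0 = 0) (hΓ'0 : Γ' 0 = 0) :
    ∀ q₁ q₂ : ℝ, 0 < q₁ → 0 < q₂ →
      0 ≤ Γ (q₁ + q₂) - Γ q₁ - Γ q₂ ∧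
      Γ (q₁ + q₂) - Γ q₁ - Γ q₂ ≤ 2 * (q₁ * Γ q₂ + q₂ * Γ q₁) / (q₁ + q₂) := by
  -- continuity of Γ on Ici 0
  have hcont : ContinuousOn Γ (Ici 0) := fun x hx => (hderiv x hx).continuousWithinAt
  -- real derivative at positive points
  have hd : ∀ x : ℝ, 0 < x → HasDerivAt Γ (Γ' x) x := fun x hx =>
    (hderiv x hx.le).hasDerivAt (Ici_mem_nhds hx)
  -- subadditivity of Γ'
  have hsub : ∀ a b : ℝ, 0 < a → 0 < b → Γ' (a + b) ≤ Γ' a + Γ' b := by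
    intro a b ha hb
    have hs : 0 < a + b := by linarith
    have h1 := concave_scale' hconc hΓ'0 ha.le (by linarith) hs
    have h2 := concave_scale' hconc hΓ'0 hb.le (by linarith) hs
    have : (a / (a + b)) * Γ' (a + b) + (b / (a + b)) * Γ' (a + b) = Γ' (a + b) := by
      field_simp
    linarith
  -- q Γ' q ≤ 2 Γ q for q > 0
  have hkey : ∀ q : ℝ, 0 < q → q * Γ' q ≤ 2 * Γ q := by
    intro q hq
    set G : ℝ → ℝ := fun t => Γ t - t ^ 2 * Γ' q / (2 * q) with hG
    have hGcont : ContinuousOn G (Icc 0 q) := by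
      apply ContinuousOn.sub
      · exact hcont.mono (fun x hx => hx.1)
      · fun_prop
    have hGderiv : ∀ t ∈ interior (Icc (0:ℝ) q), HasDerivAt G (Γ' t - t * Γ' q / q) t := by
      intro t ht
      rw [interior_Icc] at ht
      have h1 := hd t ht.1
      have h2 : HasDerivAt (fun t : ℝ => t ^ 2 * Γ' q / (2 * q)) (t * Γ' q / q) t := by
        have : HasDerivAt (fun t : ℝ => t ^ 2) (2 * t) t := by
          simpa using hasDerivAt_pow 2 t
        have := (this.mul_const (Γ' q)).div_const (2 * q)
        exact this.congr_deriv (by rw [mul_assoc 2 t, mul_div_mul_left _ _ (two_ne_zero' ℝ)])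
      exact h1.sub h2
    have hmono : MonotoneOn G (Icc 0 q) := by
      apply monotoneOn_of_deriv_nonneg (convex_Icc 0 q) hGcont
      · intro t ht
        exact (hGderiv t ht).differentiableAt.differentiableWithinAt
      · intro t ht
        rw [(hGderiv t ht).deriv]
        rw [interior_Icc] at ht
        have := concave_scale' hconc hΓ'0 ht.1.le ht.2.le hq
        have h : t / q * Γ' q = t * Γ' q / q := by ring
        linarith [h ▸ this]
    have := hmono (left_mem_Icc.2 hq.le) (right_mem_Icc.2 hq.le) hq.le
    simp only [hG, hΓ0] at this
    have hq' : (0:ℝ) < 2 * q := by linarith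
    have h' : q ^ 2 * Γ' q / (2 * q) ≤ Γ q := by simpa using this
    rw [div_le_iff₀ hq'] at h'
    nlinarith
  intro q₁ q₂ hq₁ hq₂
  have hs : 0 < q₁ + q₂ := by linarith
  constructor
  · -- superadditivity
    have h1 := convex_scale' hconv hΓ0 hq₁.le (by linarith) hs
    have h2 := convex_scale' hconv hΓ0 hq₂.le (by linarith) hs
    have : (q₁ / (q₁ + q₂)) * Γ (q₁ + q₂) + (q₂ / (q₁ + q₂)) * Γ (q₁ + q₂) = Γ (q₁ + q₂) := by
      field_simp
    linarith
  · -- upper bound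
    -- main step: Γ(a+b) - Γ a - Γ b ≤ b * Γ' a
    have hmain : ∀ a b : ℝ, 0 < a → 0 < b → Γ (a + b) - Γ a - Γ b ≤ b * Γ' a := by
      intro a b ha hb
      set F : ℝ → ℝ := fun t => Γ (a + t) - Γ t - t * Γ' a with hF
      have hFcont : ContinuousOn F (Icc 0 b) := by
        apply ContinuousOn.sub
        apply ContinuousOn.sub
        · exact hcont.comp (by fun_prop) (fun t ht => mem_Ici.2 (by linarith [ht.1]))
        · exact hcont.mono (fun x hx => hx.1)
        · fun_prop
      have hFderiv : ∀ t ∈ interior (Icc (0:ℝ) b),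
          HasDerivAt F (Γ' (a + t) - Γ' t - Γ' a) t := by
        intro t ht
        rw [interior_Icc] at ht
        have h1 : HasDerivAt (fun t => Γ (a + t)) (Γ' (a + t)) t := by
          have hin : HasDerivAt (fun t : ℝ => a + t) 1 t := by
            simpa using (hasDerivAt_id t).const_add a
          have := (hd (a + t) (by linarith [ht.1])).comp t hin
          exact this.congr_deriv (mul_one _)
        exact (h1.sub (hd t ht.1)).sub (hasDerivAt_mul_const (Γ' a))
      have hanti : AntitoneOn F (Icc 0 b) := by
        apply antitoneOn_of_deriv_nonpos (convex_Icc 0 b) hFcont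
        · intro t ht
          exact (hFderiv t ht).differentiableAt.differentiableWithinAt
        · intro t ht
          rw [(hFderiv t ht).deriv]
          rw [interior_Icc] at ht
          have := hsub a t ha ht.1
          linarith
      have := hanti (left_mem_Icc.2 hb.le) (right_mem_Icc.2 hb.le) hb.le
      simp only [hF, hΓ0, add_zero, mul_zero, sub_zero] at this
      linarith
    have h1 := hmain q₁ q₂ hq₁ hq₂
    have h2 := hmain q₂ q₁ hq₂ hq₁
    rw [add_comm q₂ q₁] at h2
    have k1 := hkey q₁ hq₁
    have k2 := hkey q₂ hq₂
    rw [le_div_iff₀ hs]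
    nlinarith [mul_le_mul_of_nonneg_left h1 hq₁.le, mul_le_mul_of_nonneg_left h2 hq₂.le,
      mul_le_mul_of_nonneg_left k1 hq₂.le, mul_le_mul_of_nonneg_left k2 hq₁.le]
end

section
/- Let α ∈ (0,1/2) and θ ∈ (−1,0] with 2α − θ < 1, let k > 0, let φ be a nonnegative measurable function on (0,∞)² with φ(v',v'') ≤ k(1+v'+v'')/(v'+v'')^α, and let P(v|v';v'') = (θ+2) v^θ/(v'+v'')^{1+θ} for 0 < v < v'+v'' and 0 otherwise. Let n ≥ 1, 0 ≤ s ≤ t, B > 0, and let g : (0,n) × [s,t] → [0,∞) be measurable with ∫_0^n (v^{−2α} + v) g(v,ζ) dv ≤ B for every ζ ∈ [s,t]. Then (1/2) ∫_s^t ∫_0^n ∫_0^n ∫_0^{v'+v''} v^{−α} P(v|v';v'') φ(v',v'') g(v',ζ) g(v'',ζ) dv dv'' dv' dζ ≤ (13/2)·k·((θ+2)/(θ+1−α))·B²·(t−s). -/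
open MeasureTheory Set Real ENNReal

/-- The power-law probability distribution function
`P(v|v';v'') = (θ+2) v^θ/(v'+v'')^{1+θ}` for `0 < v < v'+v''`, and `0` otherwise. -/
noncomputable def Pker (θ : ℝ) (v v' v'' : ℝ) : ℝ :=
  if 0 < v ∧ v < v' + v'' then (θ + 2) * v ^ θ / (v' + v'') ^ (1 + θ) else 0

/-!
Since `α < θ + 1`, the fragment distribution integrates against `v^{-α}` to
`((θ+2)/(θ+1-α)) (v'+v'')^{-α}`, which pulls out of the innermost integral. With
`w(v) = v^{-2α} + v ≥ 1`, the growth bound on `φ` gives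
`(v'+v'')^{-α} φ(v',v'') ≤ k ((v'+v'')^{-2α} + (v'+v'')^{1-2α}) ≤ k (w(v') + 1 + w(v''))
  ≤ 3k w(v') w(v'')`,
so for each time `ζ` the double integral over `(0,n)²` factorises and is at most
`3k ((θ+2)/(θ+1-α)) B²`; integrating over `[s,t]` gives the claim, as `3/2 ≤ 13/2`.
-/

noncomputable def momentWeight (α x : ℝ) : ℝ :=
  x ^ (-(2 * α)) + x

lemma one_le_momentWeight {α x : ℝ} (hα : 0 ≤ α) (hx : 0 < x) : 1 ≤ momentWeight α x := by
  unfold momentWeight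
  rcases le_total x 1 with h | h
  · linarith [one_le_rpow_of_pos_of_le_one_of_nonpos hx h (by linarith : -(2 * α) ≤ 0)]
  · linarith [(rpow_pos_of_pos hx (-(2 * α))).le]

lemma rpow_le_one_add {x p : ℝ} (hx : 0 ≤ x) (hp₀ : 0 ≤ p) (hp₁ : p ≤ 1) :
    x ^ p ≤ 1 + x := by
  rcases le_total x 1 with h | h
  · linarith [rpow_le_one hx h hp₀]
  · linarith [Real.rpow_one x ▸ rpow_le_rpow_of_exponent_le h hp₁]

lemma rpow_neg_mul_one_add_div_rpow_le {α x y : ℝ} (hα₀ : 0 ≤ α) (hα : α ≤ 1 / 2)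
    (hx : 0 < x) (hy : 0 < y) :
    (x + y) ^ (-α) * ((1 + x + y) / (x + y) ^ α)
      ≤ 3 * momentWeight α x * momentWeight α y := by
  have ha : 0 < x + y := add_pos hx hy
  have hsplit : (x + y) ^ (-α) * ((1 + x + y) / (x + y) ^ α)
      = (x + y) ^ (-(2 * α)) + (x + y) ^ (1 - 2 * α) := by
    rw [sub_eq_add_neg, rpow_add ha, Real.rpow_one, rpow_neg ha.le, rpow_neg ha.le,
      mul_comm 2 α, rpow_mul ha.le, Real.rpow_two]
    field_simp
    ring
  have h₁ : (x + y) ^ (-(2 * α)) ≤ x ^ (-(2 * α)) :=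
    rpow_le_rpow_of_nonpos hx (by linarith) (by linarith)
  have h₂ : (x + y) ^ (1 - 2 * α) ≤ 1 + (x + y) :=
    rpow_le_one_add ha.le (by linarith) (by linarith)
  have hwx := one_le_momentWeight hα₀ hx
  have hwy := one_le_momentWeight hα₀ hy
  have hy_le : y ≤ momentWeight α y :=
    le_add_of_nonneg_left (rpow_pos_of_pos hy _).le
  have hsum : (x + y) ^ (-(2 * α)) + (x + y) ^ (1 - 2 * α) ≤
      momentWeight α x + 1 + momentWeight α y := by
    unfold momentWeight at hy_le ⊢
    linarith
  rw [hsplit]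
  nlinarith [mul_nonneg (sub_nonneg.2 hwx) (sub_nonneg.2 hwy)]

lemma setLIntegral_Ioo_rpow {a p : ℝ} (ha : 0 < a) (hp : -1 < p) :
    ∫⁻ v in Ioo (0 : ℝ) a, ENNReal.ofReal (v ^ p)
      = ENNReal.ofReal (a ^ (p + 1) / (p + 1)) := by
  rw [Measure.restrict_congr_set Ioo_ae_eq_Ioc, ← ofReal_integral_eq_lintegral_ofReal]
  · rw [← intervalIntegral.integral_of_le ha.le, integral_rpow (Or.inl hp),
      zero_rpow (by linarith : p + 1 ≠ 0), sub_zero]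
  · exact (intervalIntegrable_iff_integrableOn_Ioc_of_le ha.le).mp
      (intervalIntegral.intervalIntegrable_rpow' hp)
  · filter_upwards [ae_restrict_mem measurableSet_Ioc] with v hv
    exact (rpow_pos_of_pos hv.1 p).le

lemma setLIntegral_rpow_neg_mul_Pker {α θ x y : ℝ} (hxy : 0 < x + y) (hαθ : α < θ + 1) :
    ∫⁻ v in Ioo (0 : ℝ) (x + y), ENNReal.ofReal (v ^ (-α) * Pker θ v x y)
      = ENNReal.ofReal ((θ + 2) / (θ + 1 - α) * (x + y) ^ (-α)) := by
  set c := (θ + 2) / (x + y) ^ (1 + θ) with hc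
  have hpow : (x + y) ^ (θ - α + 1) = (x + y) ^ (-α) * (x + y) ^ (1 + θ) := by
    rw [← rpow_add hxy]; ring_nf
  calc ∫⁻ v in Ioo (0 : ℝ) (x + y), ENNReal.ofReal (v ^ (-α) * Pker θ v x y)
      = ∫⁻ v in Ioo (0 : ℝ) (x + y), ENNReal.ofReal c * ENNReal.ofReal (v ^ (θ - α)) := by
        refine setLIntegral_congr_fun measurableSet_Ioo fun v hv => ?_
        rw [← ofReal_mul' (rpow_nonneg hv.1.le _), Pker,
          if_pos (show 0 < v ∧ v < x + y from hv), sub_eq_add_neg θ α, rpow_add hv.1, hc]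
        congr 1
        ring
    _ = ENNReal.ofReal c * ENNReal.ofReal ((x + y) ^ (θ - α + 1) / (θ - α + 1)) := by
        rw [lintegral_const_mul' _ _ ofReal_ne_top, setLIntegral_Ioo_rpow hxy (by linarith)]
    _ = ENNReal.ofReal ((θ + 2) / (θ + 1 - α) * (x + y) ^ (-α)) := by
        rw [← ofReal_mul' (div_nonneg (rpow_nonneg hxy.le _) (by linarith)), hpow,
          show θ - α + 1 = θ + 1 - α by ring, hc]
        congr 1
        have : (x + y) ^ (1 + θ) ≠ 0 := (rpow_pos_of_pos hxy _).ne'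
        field_simp

lemma setLIntegral_breakage_le {α θ k x y φxy p q : ℝ} (hα₀ : 0 ≤ α) (hα : α ≤ 1 / 2)
    (hαθ : α < θ + 1) (hk : 0 ≤ k) (hx : 0 < x) (hy : 0 < y) (hφ₀ : 0 ≤ φxy)
    (hφ : φxy ≤ k * (1 + x + y) / (x + y) ^ α) (hp : 0 ≤ p) (hq : 0 ≤ q) :
    ∫⁻ v in Ioo (0 : ℝ) (x + y), ENNReal.ofReal (v ^ (-α) * Pker θ v x y * φxy * p * q)
      ≤ ENNReal.ofReal (3 * k * ((θ + 2) / (θ + 1 - α)))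
          * ENNReal.ofReal (momentWeight α x * p) * ENNReal.ofReal (momentWeight α y * q) := by
  set C := (θ + 2) / (θ + 1 - α)
  have hC : 0 ≤ C := div_nonneg (by linarith) (by linarith)
  have hxy : 0 < x + y := add_pos hx hy
  have hpq : 0 ≤ φxy * p * q := mul_nonneg (mul_nonneg hφ₀ hp) hq
  have hkernel : (x + y) ^ (-α) * φxy ≤ k * (3 * momentWeight α x * momentWeight α y) :=
    calc (x + y) ^ (-α) * φxy
        ≤ (x + y) ^ (-α) * (k * (1 + x + y) / (x + y) ^ α) :=
          mul_le_mul_of_nonneg_left hφ (rpow_nonneg hxy.le _)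
      _ = k * ((x + y) ^ (-α) * ((1 + x + y) / (x + y) ^ α)) := by ring
      _ ≤ k * (3 * momentWeight α x * momentWeight α y) :=
          mul_le_mul_of_nonneg_left (rpow_neg_mul_one_add_div_rpow_le hα₀ hα hx hy) hk
  calc ∫⁻ v in Ioo (0 : ℝ) (x + y), ENNReal.ofReal (v ^ (-α) * Pker θ v x y * φxy * p * q)
      = ∫⁻ v in Ioo (0 : ℝ) (x + y),
          ENNReal.ofReal (v ^ (-α) * Pker θ v x y) * ENNReal.ofReal (φxy * p * q) := by
        refine lintegral_congr fun v => ?_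
        rw [← ofReal_mul' hpq]
        ring_nf
    _ = ENNReal.ofReal (C * (x + y) ^ (-α) * (φxy * p * q)) := by
        rw [lintegral_mul_const' _ _ ofReal_ne_top, setLIntegral_rpow_neg_mul_Pker hxy hαθ,
          ← ofReal_mul' hpq]
    _ ≤ ENNReal.ofReal (C * (k * (3 * momentWeight α x * momentWeight α y)) * (p * q)) := by
        refine ofReal_le_ofReal ?_
        calc C * (x + y) ^ (-α) * (φxy * p * q)
            = C * ((x + y) ^ (-α) * φxy) * (p * q) := by ring
          _ ≤ _ := by gcongr
    _ = ENNReal.ofReal (3 * k * C) * ENNReal.ofReal (momentWeight α x * p)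
          * ENNReal.ofReal (momentWeight α y * q) := by
        have hwx := zero_le_one.trans (one_le_momentWeight hα₀ hx)
        have hwy := zero_le_one.trans (one_le_momentWeight hα₀ hy)
        rw [← ofReal_mul' (mul_nonneg hwx hp), ← ofReal_mul' (mul_nonneg hwy hq)]
        ring_nf

lemma setLIntegral_setLIntegral_le_mul_mul {X : Type*} [MeasurableSpace X] {μ : Measure X}
    {s : Set X} (hs : MeasurableSet s) {F : X → X → ℝ≥0∞} {f : X → ℝ≥0∞} {c M : ℝ≥0∞}
    (hc : c ≠ ∞) (hf : ∀ x ∈ s, f x ≠ ∞) (hM : M ≠ ∞)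
    (hF : ∀ x ∈ s, ∀ y ∈ s, F x y ≤ c * f x * f y) (hfM : ∫⁻ x in s, f x ∂μ ≤ M) :
    ∫⁻ x in s, ∫⁻ y in s, F x y ∂μ ∂μ ≤ c * M * M := by
  have hinner : ∀ x ∈ s, ∫⁻ y in s, F x y ∂μ ≤ c * f x * M := fun x hx =>
    calc ∫⁻ y in s, F x y ∂μ ≤ ∫⁻ y in s, c * f x * f y ∂μ := setLIntegral_mono' hs (hF x hx)
      _ = c * f x * ∫⁻ y in s, f y ∂μ := lintegral_const_mul' _ _ (mul_ne_top hc (hf x hx))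
      _ ≤ c * f x * M := by gcongr
  calc ∫⁻ x in s, ∫⁻ y in s, F x y ∂μ ∂μ ≤ ∫⁻ x in s, c * f x * M ∂μ :=
        setLIntegral_mono' hs hinner
    _ = c * (∫⁻ x in s, f x ∂μ) * M := by
        rw [lintegral_mul_const' _ _ hM, lintegral_const_mul' _ _ hc]
    _ ≤ c * M * M := by gcongr

theorem breakage_equicontinuity_estimate_general
    (α θ k : ℝ) (hα₁ : 0 < α) (hα₂ : α < 1/2)
    (hαθ : 2*α - θ < 1) (hk : 0 < k)
    (φ : ℝ → ℝ → ℝ)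
    (hφnn : ∀ v v' : ℝ, 0 ≤ φ v v')
    (hφb : ∀ v v' : ℝ, 0 < v → 0 < v' → φ v v' ≤ k * (1 + v + v') / (v + v') ^ α)
    (n : ℝ) (s t B : ℝ) (hst : s ≤ t) (hB : 0 < B)
    (g : ℝ → ℝ → ℝ)
    (hgnn : ∀ v ζ : ℝ, 0 ≤ g v ζ)
    (hgB : ∀ ζ ∈ Icc s t,
      ∫⁻ v in Ioo (0:ℝ) n, ENNReal.ofReal ((v ^ (-(2*α)) + v) * g v ζ)
        ≤ ENNReal.ofReal B) :
    (1/2 : ℝ≥0∞) * ∫⁻ ζ in Icc s t, ∫⁻ v' in Ioo (0:ℝ) n, ∫⁻ v'' in Ioo (0:ℝ) n,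
        ∫⁻ v in Ioo (0:ℝ) (v' + v''),
          ENNReal.ofReal (v ^ (-α) * Pker θ v v' v'' * φ v' v'' * g v' ζ * g v'' ζ)
      ≤ ENNReal.ofReal ((13/2) * k * ((θ + 2) / (θ + 1 - α)) * B^2 * (t - s)) := by
  set C := (θ + 2) / (θ + 1 - α)
  have hC : 0 ≤ C := div_nonneg (by linarith) (by linarith)
  have hkC : 0 ≤ 3 * k * C := by positivity
  have hslice : ∀ ζ ∈ Icc s t, ∫⁻ v' in Ioo (0:ℝ) n, ∫⁻ v'' in Ioo (0:ℝ) n,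
      ∫⁻ v in Ioo (0:ℝ) (v' + v''),
        ENNReal.ofReal (v ^ (-α) * Pker θ v v' v'' * φ v' v'' * g v' ζ * g v'' ζ)
      ≤ ENNReal.ofReal (3 * k * C) * ENNReal.ofReal B * ENNReal.ofReal B := fun ζ hζ =>
    setLIntegral_setLIntegral_le_mul_mul measurableSet_Ioo ofReal_ne_top
      (fun _ _ => ofReal_ne_top) ofReal_ne_top
      (fun x hx y hy => setLIntegral_breakage_le hα₁.le hα₂.le (by linarith) hk.le hx.1 hy.1
        (hφnn x y) (hφb x y hx.1 hy.1) (hgnn x ζ) (hgnn y ζ))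
      (hgB ζ hζ)
  have hkCB : 0 ≤ 3 * k * C * B := mul_nonneg hkC hB.le
  calc _ ≤ (1/2 : ℝ≥0∞) * ∫⁻ _ in Icc s t,
        ENNReal.ofReal (3 * k * C) * ENNReal.ofReal B * ENNReal.ofReal B :=
        mul_le_mul_right (setLIntegral_mono' measurableSet_Icc hslice) _
    _ = ENNReal.ofReal (1/2 * (3 * k * C * B * B * (t - s))) := by
        rw [setLIntegral_const, Real.volume_Icc, ← ofReal_mul hkC, ← ofReal_mul hkCB,
          ← ofReal_mul (mul_nonneg hkCB hB.le), ofReal_mul (by norm_num : (0 : ℝ) ≤ 1 / 2),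
          ofReal_div_of_pos two_pos, ofReal_one, ofReal_ofNat]
    _ ≤ _ := ofReal_le_ofReal (by
        have : 0 ≤ k * C * B ^ 2 * (t - s) := mul_nonneg (by positivity) (sub_nonneg.2 hst)
        nlinarith)

/-- Key equicontinuity estimate for the breakage contribution: if `φ(v',v'') ≤
k(1+v'+v'')/(v'+v'')^α` and the moments of `g(·,ζ)` are bounded by `B` for `ζ ∈ [s,t]`, then
`(1/2)∫_s^t ∫_0^n ∫_0^n ∫_0^{v'+v''} v^{−α} P(v|v';v'') φ(v',v'') g(v',ζ) g(v'',ζ)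
  dv dv'' dv' dζ ≤ (13/2)·k·((θ+2)/(θ+1−α))·B²·(t−s)`. -/
theorem breakage_equicontinuity_estimate
    (α θ k : ℝ) (hα₁ : 0 < α) (hα₂ : α < 1/2) (hθ₁ : -1 < θ) (hθ₂ : θ ≤ 0)
    (hαθ : 2*α - θ < 1) (hk : 0 < k)
    (φ : ℝ → ℝ → ℝ) (hφm : Measurable (Function.uncurry φ))
    (hφnn : ∀ v v' : ℝ, 0 ≤ φ v v')
    (hφb : ∀ v v' : ℝ, 0 < v → 0 < v' → φ v v' ≤ k * (1 + v + v') / (v + v') ^ α)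
    (n : ℝ) (hn : 1 ≤ n) (s t B : ℝ) (hs : 0 ≤ s) (hst : s ≤ t) (hB : 0 < B)
    (g : ℝ → ℝ → ℝ) (hgm : Measurable (Function.uncurry g))
    (hgnn : ∀ v ζ : ℝ, 0 ≤ g v ζ)
    (hgB : ∀ ζ ∈ Icc s t,
      ∫⁻ v in Ioo (0:ℝ) n, ENNReal.ofReal ((v ^ (-(2*α)) + v) * g v ζ)
        ≤ ENNReal.ofReal B) :
    (1/2 : ℝ≥0∞) * ∫⁻ ζ in Icc s t, ∫⁻ v' in Ioo (0:ℝ) n, ∫⁻ v'' in Ioo (0:ℝ) n,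
        ∫⁻ v in Ioo (0:ℝ) (v' + v''),
          ENNReal.ofReal (v ^ (-α) * Pker θ v v' v'' * φ v' v'' * g v' ζ * g v'' ζ)
      ≤ ENNReal.ofReal ((13/2) * k * ((θ + 2) / (θ + 1 - α)) * B^2 * (t - s)) :=
  breakage_equicontinuity_estimate_general α θ k hα₁ hα₂ hαθ hk φ hφnn hφb n s t B hst hB g hgnn hgB
end
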